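/- arXiv:1806.00854 — 2 statements merged into one kernel-verified Lean document; each statement's English description precedes it below -/
import Mathlib

section
/- Let d ≥ 1 and let f = X^{d+1} ∈ ℂ[X], and let D : ℂ[X] → ℂ[X] be the ℂ-linear map D(P) = P' + f'·P with f' = (d+1)X^d. Then the images of the monomials 1, X, X², …, X^{d-1} in the quotient ℂ[X]/range(D) form a basis of this quotient; in particular ℂ[X]/range(D) has dimension d over ℂ. -/
open Polynomial

/-- The twisted de Rham differential `D(P) = P' + f'·P` on `ℂ[X]`,
for `f = X^(d+1)`. -/
noncomputable def twistedD (d : ℕ) : ℂ[X] →ₗ[ℂ] ℂ[X] :=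
  Polynomial.derivative + LinearMap.mulLeft ℂ (Polynomial.derivative ((X : ℂ[X]) ^ (d + 1)))

/-!
For `g ≠ 0` the map `D P = P' + g P` raises the degree of every nonzero `P` by
exactly `deg g`, multiplying its leading coefficient by that of `g`. Hence `range D` meets the
polynomials of degree `< deg g` only in `0`, while any `P` of degree `≥ deg g` can be reduced
modulo `range D` to lower degree. So `range D` is a complement of `K[X]_{deg g}`, and
`1, X, …, X^(deg g - 1)` descend to a basis of the quotient. For `f = X^(d+1)`, `g = f'` has
degree `d`.
-/

namespace Polynomial

variable {K : Type*} [Field K] {g : K[X]}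

noncomputable def twistedDerivative (g : K[X]) : K[X] →ₗ[K] K[X] :=
  derivative + LinearMap.mulLeft K g

theorem twistedDerivative_apply (g P : K[X]) :
    twistedDerivative g P = derivative P + g * P :=
  rfl

theorem degree_derivative_lt_degree_mul (hg : g ≠ 0) {P : K[X]} (hP : P ≠ 0) :
    degree (derivative P) < degree (g * P) :=
  (degree_derivative_lt hP).trans_le (mul_comm g P ▸ degree_le_mul_left P hg)

theorem degree_twistedDerivative (hg : g ≠ 0) {P : K[X]} (hP : P ≠ 0) :
    degree (twistedDerivative g P) = degree (g * P) :=
  degree_add_eq_right_of_degree_lt (degree_derivative_lt_degree_mul hg hP)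

theorem leadingCoeff_twistedDerivative (hg : g ≠ 0) {P : K[X]} (hP : P ≠ 0) :
    leadingCoeff (twistedDerivative g P) = leadingCoeff g * leadingCoeff P := by
  rw [twistedDerivative_apply,
    leadingCoeff_add_of_degree_lt (degree_derivative_lt_degree_mul hg hP), leadingCoeff_mul]

theorem disjoint_range_twistedDerivative_degreeLT (hg : g ≠ 0) :
    Disjoint (LinearMap.range (twistedDerivative g)) (degreeLT K g.natDegree) := by
  rw [Submodule.disjoint_def]
  rintro _ ⟨P, rfl⟩ hlt
  by_contra hne
  have hP : P ≠ 0 := by rintro rfl; exact hne (map_zero _)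
  rw [mem_degreeLT, degree_twistedDerivative hg hP, degree_mul, degree_eq_natDegree hg,
    degree_eq_natDegree hP, ← Nat.cast_add, Nat.cast_lt] at hlt
  omega

theorem exists_degree_sub_twistedDerivative_lt (hg : g ≠ 0) {P : K[X]} (hP : P ≠ 0)
    (hdeg : g.natDegree ≤ P.natDegree) :
    ∃ Q, degree (P - twistedDerivative g Q) < degree P := by
  have hlc : leadingCoeff P / leadingCoeff g ≠ 0 :=
    div_ne_zero (leadingCoeff_ne_zero.2 hP) (leadingCoeff_ne_zero.2 hg)
  set Q := C (leadingCoeff P / leadingCoeff g) * X ^ (P.natDegree - g.natDegree)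
  have hQ : Q ≠ 0 := mul_ne_zero (C_ne_zero.2 hlc) (pow_ne_zero _ X_ne_zero)
  refine ⟨Q, degree_sub_lt_left ?_ hP ?_⟩
  · rw [degree_twistedDerivative hg hQ, degree_mul, degree_C_mul_X_pow _ hlc,
      degree_eq_natDegree hg, degree_eq_natDegree hP, ← Nat.cast_add, Nat.add_sub_cancel' hdeg]
  · rw [leadingCoeff_twistedDerivative hg hQ, leadingCoeff_mul, leadingCoeff_C,
      leadingCoeff_X_pow, mul_one, mul_div_cancel₀ _ (leadingCoeff_ne_zero.2 hg)]

theorem codisjoint_range_twistedDerivative_degreeLT (hg : g ≠ 0) :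
    Codisjoint (LinearMap.range (twistedDerivative g)) (degreeLT K g.natDegree) := by
  rw [codisjoint_iff, Submodule.eq_top_iff']
  intro P
  induction P using degree_lt_wf.induction with
  | _ P ih =>
    by_cases hlow : degree P < g.natDegree
    · exact Submodule.mem_sup_right (mem_degreeLT.2 hlow)
    have hP : P ≠ 0 := by rintro rfl; exact hlow (by simp)
    have hdeg : g.natDegree ≤ P.natDegree := by
      rw [degree_eq_natDegree hP, Nat.cast_lt] at hlow; omega
    obtain ⟨Q, hlt⟩ := exists_degree_sub_twistedDerivative_lt hg hP hdeg
    rw [← sub_add_cancel P (twistedDerivative g Q)]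
    exact Submodule.add_mem _ (ih _ hlt) (Submodule.mem_sup_left (LinearMap.mem_range_self _ _))

theorem isCompl_range_twistedDerivative_degreeLT (hg : g ≠ 0) :
    IsCompl (LinearMap.range (twistedDerivative g)) (degreeLT K g.natDegree) :=
  ⟨disjoint_range_twistedDerivative_degreeLT hg, codisjoint_range_twistedDerivative_degreeLT hg⟩

end Polynomial

theorem Submodule.exists_basis_quotient_of_isCompl {R M ι : Type*} [Ring R] [AddCommGroup M]
    [Module R M] {p q : Submodule R M} (h : IsCompl p q) (b : Module.Basis ι R q) :
    ∃ B : Module.Basis ι R (M ⧸ p), ∀ i, B i = p.mkQ (b i) :=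
  ⟨b.map (p.quotientEquivOfIsCompl q h).symm, fun _ => rfl⟩

theorem twistedD_eq_twistedDerivative (d : ℕ) :
    twistedD d = twistedDerivative (derivative ((X : ℂ[X]) ^ (d + 1))) :=
  rfl

theorem stmt_4_general (d : ℕ) :
    (∃ B : Module.Basis (Fin d) ℂ (ℂ[X] ⧸ LinearMap.range (twistedD d)),
        ∀ i : Fin d, B i = Submodule.mkQ (LinearMap.range (twistedD d)) ((X : ℂ[X]) ^ (i : ℕ))) ∧
      Module.finrank ℂ (ℂ[X] ⧸ LinearMap.range (twistedD d)) = d := by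
  have hdeg : (derivative ((X : ℂ[X]) ^ (d + 1))).natDegree = d := by
    rw [natDegree_derivative, natDegree_X_pow, Nat.add_sub_cancel]
  have hg : derivative ((X : ℂ[X]) ^ (d + 1)) ≠ 0 := by
    simpa using Nat.cast_add_one_ne_zero (R := ℂ[X]) d
  have hcompl := isCompl_range_twistedDerivative_degreeLT hg
  rw [hdeg, ← twistedD_eq_twistedDerivative] at hcompl
  obtain ⟨B, hB⟩ := Submodule.exists_basis_quotient_of_isCompl hcompl (degreeLT.basis ℂ d)
  refine ⟨⟨B, fun i => by rw [hB, degreeLT.basis_val]⟩, ?_⟩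
  rw [Module.finrank_eq_card_basis B, Fintype.card_fin]

/-- The images of `1, X, …, X^(d-1)` in `ℂ[X]/range D` form a basis;
in particular the quotient has dimension `d`. -/
theorem stmt_4 (d : ℕ) (hd : 1 ≤ d) :
    (∃ B : Module.Basis (Fin d) ℂ (ℂ[X] ⧸ LinearMap.range (twistedD d)),
        ∀ i : Fin d, B i = Submodule.mkQ (LinearMap.range (twistedD d)) ((X : ℂ[X]) ^ (i : ℕ))) ∧
      Module.finrank ℂ (ℂ[X] ⧸ LinearMap.range (twistedD d)) = d :=
  stmt_4_general d
end

section
/- Let d ≥ 1 and f = X^{d+1} ∈ ℂ[X] with derivative f' = (d+1)X^d. Let D : ℂ[X] → ℂ[X] be D(P) = P' + f'·P and let M : ℂ[X] → ℂ[X] be M(P) = f'·P. Then the ℂ-dimensions of the cokernels agree: dim_ℂ (ℂ[X]/range(D)) = dim_ℂ (ℂ[X]/range(M)). -/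
/-!
Both `D` and `M` raise the degree of every nonzero polynomial by exactly `d`: for `M` because
`deg f' = d`, for `D` because the extra term `P'` has lower degree than `P`. The range of any
linear map on `K[X]` with this property is complementary to the polynomials of degree `< d`:
it meets them only in `0`, and the leading term of a polynomial of degree `≥ d` can be cancelled
by an element of the range. Hence both cokernels have dimension `d`.
-/

open Polynomial

/-- Multiplication by `f' = (d+1)X^d` on `ℂ[X]`. -/
noncomputable def mulByDf (d : ℕ) : ℂ[X] →ₗ[ℂ] ℂ[X] :=
  LinearMap.mulLeft ℂ (Polynomial.derivative ((X : ℂ[X]) ^ (d + 1)))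

namespace Polynomial

variable {K : Type*} [Field K]

theorem codisjoint_range_degreeLT_of_degree_map {T : K[X] →ₗ[K] K[X]} {d : ℕ}
    (hT : ∀ Q, (T Q).degree = Q.degree + d) :
    Codisjoint (LinearMap.range T) (degreeLT K d) := by
  rw [codisjoint_iff, Submodule.eq_top_iff']
  intro P
  induction P using degree_lt_wf.induction with | _ P ih => ?_
  by_cases hPd : P.degree < d
  · exact Submodule.mem_sup_right (mem_degreeLT.2 hPd)
  have hP : P ≠ 0 := by rintro rfl; simp at hPd
  obtain ⟨m, hm⟩ : ∃ m, P.natDegree = m + d :=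
    ⟨P.natDegree - d, by
      rw [degree_eq_natDegree hP, not_lt, Nat.cast_le] at hPd; omega⟩
  have hTX : (T (X ^ m)).degree = P.degree := by
    rw [hT, degree_X_pow, degree_eq_natDegree hP, hm]; norm_cast
  have hTX0 : T (X ^ m) ≠ 0 := by rwa [← degree_ne_bot, hTX, degree_ne_bot]
  set c := P.leadingCoeff / (T (X ^ m)).leadingCoeff
  have hc : c ≠ 0 := div_ne_zero (leadingCoeff_ne_zero.2 hP) (leadingCoeff_ne_zero.2 hTX0)
  have hcT : T (c • X ^ m) = C c * T (X ^ m) := by rw [map_smul, smul_eq_C_mul]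
  have hlower : (P - T (c • X ^ m)).degree < P.degree := by
    refine degree_sub_lt_left ?_ hP ?_
    · rw [hcT, degree_C_mul hc, hTX]
    · rw [hcT, leadingCoeff_mul, leadingCoeff_C, div_mul_cancel₀ _ (leadingCoeff_ne_zero.2 hTX0)]
  rw [← add_sub_cancel (T (c • X ^ m)) P]
  exact Submodule.add_mem _ (Submodule.mem_sup_left (LinearMap.mem_range_self _ _))
    (ih _ hlower)

theorem disjoint_range_degreeLT_of_degree_map {T : K[X] →ₗ[K] K[X]} {d : ℕ}
    (hT : ∀ Q, (T Q).degree = Q.degree + d) :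
    Disjoint (LinearMap.range T) (degreeLT K d) := by
  rw [disjoint_iff_inf_le]
  rintro _ ⟨⟨Q, rfl⟩, hQ⟩
  rw [SetLike.mem_coe, mem_degreeLT, hT] at hQ
  obtain rfl : Q = 0 := by
    by_contra hQ0
    rw [degree_eq_natDegree hQ0] at hQ
    norm_cast at hQ
    omega
  simp

theorem isCompl_range_degreeLT_of_degree_map {T : K[X] →ₗ[K] K[X]} {d : ℕ}
    (hT : ∀ Q, (T Q).degree = Q.degree + d) :
    IsCompl (LinearMap.range T) (degreeLT K d) :=
  ⟨disjoint_range_degreeLT_of_degree_map hT, codisjoint_range_degreeLT_of_degree_map hT⟩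

theorem finrank_quotient_range_of_degree_map {T : K[X] →ₗ[K] K[X]} {d : ℕ}
    (hT : ∀ Q, (T Q).degree = Q.degree + d) :
    Module.finrank K (K[X] ⧸ LinearMap.range T) = d := by
  rw [(Submodule.quotientEquivOfIsCompl _ _ (isCompl_range_degreeLT_of_degree_map hT)).finrank_eq,
    (degreeLTEquiv K d).finrank_eq, Module.finrank_fin_fun]

theorem degree_derivative_add_mul {R : Type*} [Semiring R] [NoZeroDivisors R] {g : R[X]}
    (hg : g ≠ 0) (Q : R[X]) : (derivative Q + g * Q).degree = g.degree + Q.degree := by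
  rcases eq_or_ne Q 0 with rfl | hQ
  · simp
  have hlt : (derivative Q).degree < (g * Q).degree := by
    rw [degree_mul]
    exact (degree_derivative_lt hQ).trans_le (le_add_of_nonneg_left (zero_le_degree_iff.2 hg))
  rw [degree_add_eq_right_of_degree_lt hlt, degree_mul]

theorem degree_derivative_X_pow_succ {R : Type*} [Semiring R] [CharZero R] (d : ℕ) :
    (derivative ((X : R[X]) ^ (d + 1))).degree = d := by
  rw [derivative_X_pow, Nat.add_sub_cancel]
  exact degree_C_mul_X_pow d (Nat.cast_ne_zero.2 d.succ_ne_zero)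

end Polynomial

theorem degree_mulByDf (d : ℕ) (Q : ℂ[X]) : (mulByDf d Q).degree = Q.degree + d := by
  rw [mulByDf, LinearMap.mulLeft_apply, degree_mul, degree_derivative_X_pow_succ, add_comm]

theorem degree_twistedD (d : ℕ) (Q : ℂ[X]) : (twistedD d Q).degree = Q.degree + d := by
  have hf' : derivative ((X : ℂ[X]) ^ (d + 1)) ≠ 0 := by
    rw [← degree_ne_bot, degree_derivative_X_pow_succ]; exact WithBot.coe_ne_bot
  rw [twistedD, LinearMap.add_apply, LinearMap.mulLeft_apply, degree_derivative_add_mul hf',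
    degree_derivative_X_pow_succ, add_comm]

theorem stmt_5_general (d : ℕ) :
    Module.finrank ℂ (ℂ[X] ⧸ LinearMap.range (twistedD d)) =
      Module.finrank ℂ (ℂ[X] ⧸ LinearMap.range (mulByDf d)) := by
  rw [finrank_quotient_range_of_degree_map (degree_twistedD d),
    finrank_quotient_range_of_degree_map (degree_mulByDf d)]

/-- Hodge–de Rham degeneration for `(𝔸¹, X^(d+1))`: the cokernels of
`D(P) = P' + f'·P` and of `M(P) = f'·P` have the same `ℂ`-dimension. -/
theorem stmt_5 (d : ℕ) (hd : 1 ≤ d) :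
    Module.finrank ℂ (ℂ[X] ⧸ LinearMap.range (twistedD d)) =
      Module.finrank ℂ (ℂ[X] ⧸ LinearMap.range (mulByDf d)) :=
  stmt_5_general d
end
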